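/- arXiv:1409.0578 — 2 statements merged into one kernel-verified Lean document; each statement's English description precedes it below -/
import Mathlib

section
/- Let (δ_m)_{m≥1} be a decreasing sequence of positive reals with δ_m → 0 and T_m := δ_1 + ⋯ + δ_m → ∞. Fix p ≥ 1 and set ω_m = δ_m^p; assume Ω_m := ω_1 + ⋯ + ω_m → ∞. Then ω_m → 0, ∑_{m≥1} |ω_{m+1}/δ_{m+1} − ω_m/δ_m| / Ω_m < ∞, and ∑_{m≥1} ω_m² / (δ_m Ω_m²) < ∞. -/
open Filter Set Finset

/-!
Write `a_m = ω_m / δ_m = δ_m^(p-1)`; since `p ≥ 1` this is a decreasing nonnegative sequence.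
The increments `|a_{m+1} - a_m|` therefore telescope to at most `a_1`, and `Ω_m ≥ Ω_1 > 0` bounds
the first series. For the second, `ω_m² / (δ_m Ω_m²) = a_m ω_m / Ω_m² ≤ a_1 ω_m / Ω_m²`, and
`ω_m / Ω_m² ≤ ω_m / (Ω_{m-1} Ω_m) = 1/Ω_{m-1} - 1/Ω_m` telescopes as well.
-/

theorem Antitone.summable_sub_succ {a : ℕ → ℝ} (ha : Antitone a) (hb : BddBelow (range a)) :
    Summable fun n => a n - a (n + 1) := by
  obtain ⟨c, hc⟩ := hb
  refine summable_of_sum_range_le (c := a 0 - c) (fun n => sub_nonneg.2 (ha n.le_succ)) fun N => ?_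
  rw [sum_range_sub']
  linarith [hc (mem_range_self N)]

theorem Antitone.summable_abs_sub_succ_div {a D : ℕ → ℝ} {c : ℝ} (ha : Antitone a)
    (hb : BddBelow (range a)) (hc : 0 < c) (hD : ∀ n, c ≤ D n) :
    Summable fun n => |a (n + 1) - a n| / D n := by
  refine ((ha.summable_sub_succ hb).div_const c).of_nonneg_of_le
    (fun n => div_nonneg (abs_nonneg _) (hc.trans_le (hD n)).le) fun n => ?_
  rw [abs_sub_comm, abs_of_nonneg (sub_nonneg.2 (ha n.le_succ))]
  exact div_le_div_of_nonneg_left (sub_nonneg.2 (ha n.le_succ)) hc (hD n)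

theorem summable_div_sq_sum_range_succ {w : ℕ → ℝ} (hw : ∀ n, 0 ≤ w n) (hw0 : 0 < w 0) :
    Summable fun n => w n / (∑ k ∈ range (n + 1), w k) ^ 2 := by
  set S : ℕ → ℝ := fun n => ∑ k ∈ range (n + 1), w k
  have hS_pos : ∀ n, 0 < S n := fun n =>
    hw0.trans_le (single_le_sum (fun k _ => hw k) (mem_range.2 n.succ_pos))
  have hS_succ : ∀ n, S (n + 1) = S n + w (n + 1) := fun n => sum_range_succ _ _
  have hS_mono : Monotone S := monotone_nat_of_le_succ fun n => by
    rw [hS_succ]; linarith [hw (n + 1)]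
  have h_inv_anti : Antitone fun n => 1 / S n := fun m n h =>
    one_div_le_one_div_of_le (hS_pos m) (hS_mono h)
  rw [← summable_nat_add_iff 1]
  refine (h_inv_anti.summable_sub_succ ⟨0, ?_⟩).of_nonneg_of_le
    (fun n => div_nonneg (hw _) (sq_nonneg _)) fun n => ?_
  · rintro _ ⟨n, rfl⟩
    exact (one_div_pos.2 (hS_pos n)).le
  · have h₀ := hS_pos n
    have h₁ := hS_pos (n + 1)
    calc w (n + 1) / S (n + 1) ^ 2 ≤ w (n + 1) / (S n * S (n + 1)) := by
          rw [sq]; gcongr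
          · exact hw _
          · exact hS_mono n.le_succ
      _ = 1 / S n - 1 / S (n + 1) := by
          rw [div_sub_div _ _ h₀.ne' h₁.ne', hS_succ n]; ring

theorem power_weights_satisfy_assumption2_general (δ : ℕ → ℝ) (p : ℝ)
    (hδpos : ∀ m, 0 < δ m)
    (hδanti : ∀ m n, m ≤ n → δ n ≤ δ m)
    (hδ0 : Tendsto δ atTop (nhds 0))
    (hp : 1 ≤ p) :
    Tendsto (fun m => δ m ^ p) atTop (nhds 0) ∧
    Summable (fun m => |δ (m + 2) ^ p / δ (m + 2) - δ (m + 1) ^ p / δ (m + 1)| /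
      (∑ k ∈ Finset.range (m + 1), δ (k + 1) ^ p)) ∧
    Summable (fun m => (δ (m + 1) ^ p) ^ 2 /
      (δ (m + 1) * (∑ k ∈ Finset.range (m + 1), δ (k + 1) ^ p) ^ 2)) := by
  set a : ℕ → ℝ := fun n => δ (n + 1) ^ (p - 1)
  have h_div : ∀ n, δ n ^ p / δ n = δ n ^ (p - 1) := fun n => by
    rw [Real.rpow_sub (hδpos n), Real.rpow_one]
  have ha_anti : Antitone a := fun m n h =>
    Real.rpow_le_rpow (hδpos _).le (hδanti _ _ (by omega)) (by linarith)
  have ha_nonneg : ∀ n, 0 ≤ a n := fun n => (Real.rpow_pos_of_pos (hδpos _) _).le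
  have hω_pos : ∀ n, 0 < δ n ^ p := fun n => Real.rpow_pos_of_pos (hδpos n) _
  refine ⟨?_, ?_, ?_⟩
  · simpa [Real.zero_rpow (by linarith : p ≠ 0)] using
      hδ0.rpow_const (p := p) (Or.inr (by linarith))
  · simp_rw [h_div]
    refine ha_anti.summable_abs_sub_succ_div ⟨0, ?_⟩ (hω_pos 1) fun n => ?_
    · rintro _ ⟨n, rfl⟩; exact ha_nonneg n
    · exact single_le_sum (f := fun k => δ (k + 1) ^ p) (fun k _ => (hω_pos _).le)
        (mem_range.2 n.succ_pos)
  · refine ((summable_div_sq_sum_range_succ (fun n => (hω_pos (n + 1)).le) (hω_pos 1)).mul_left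
      (a 0)).of_nonneg_of_le (fun n => by have := hδpos (n + 1); positivity) fun n => ?_
    rw [sq, mul_div_mul_comm, h_div]
    exact mul_le_mul_of_nonneg_right (ha_anti n.zero_le) (div_nonneg (hω_pos _).le (sq_nonneg _))

/-- **Remark 1 (power weights satisfy Assumption 2).** If `(δ_m)_{m≥1}` is a decreasing
positive sequence with `δ_m → 0` and `T_m = δ_1 + ⋯ + δ_m → ∞`, `p ≥ 1`, `ω_m = δ_m^p`
and `Ω_m = ω_1 + ⋯ + ω_m → ∞`, then `ω_m → 0`,
`∑_{m≥1} |ω_{m+1}/δ_{m+1} − ω_m/δ_m| / Ω_m < ∞` and `∑_{m≥1} ω_m²/(δ_m Ω_m²) < ∞`.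
(Here the sequence entry of index `m ≥ 1` in the paper is `δ m` for `m ≥ 1`.) -/
theorem power_weights_satisfy_assumption2 (δ : ℕ → ℝ) (p : ℝ)
    (hδpos : ∀ m, 0 < δ m)
    (hδanti : ∀ m n, m ≤ n → δ n ≤ δ m)
    (hδ0 : Tendsto δ atTop (nhds 0))
    (hT : Tendsto (fun m => ∑ k ∈ Finset.range m, δ (k + 1)) atTop atTop)
    (hp : 1 ≤ p)
    (hΩ : Tendsto (fun m => ∑ k ∈ Finset.range m, δ (k + 1) ^ p) atTop atTop) :
    Tendsto (fun m => δ m ^ p) atTop (nhds 0) ∧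
    Summable (fun m => |δ (m + 2) ^ p / δ (m + 2) - δ (m + 1) ^ p / δ (m + 1)| /
      (∑ k ∈ Finset.range (m + 1), δ (k + 1) ^ p)) ∧
    Summable (fun m => (δ (m + 1) ^ p) ^ 2 /
      (δ (m + 1) * (∑ k ∈ Finset.range (m + 1), δ (k + 1) ^ p) ^ 2)) :=
  power_weights_satisfy_assumption2_general δ p hδpos hδanti hδ0 hp
end

section
/- Fix d ≥ 1, N ≥ 1, covariates x_1,…,x_N ∈ ℝ^d, labels y_1,…,y_N ∈ {−1, 1}, and a symmetric positive definite matrix C ∈ ℝ^{d×d} with smallest eigenvalue of C^{-1} denoted λ_min > 0. Define G(θ) = −C^{-1}θ + ∑_{i=1}^N logit(−y_i⟨θ,x_i⟩) y_i x_i, where logit(z) = e^z/(1+e^z) (G is the gradient of the log-posterior of the Bayesian logistic regression model with prior N(0,C)), and set V(θ) = 1 + ‖θ‖². Then there exists β ∈ (0,∞) such that for every θ ∈ ℝ^d: ⟨∇V(θ), ½ G(θ)⟩ ≤ −(λ_min/4) V(θ) + β. -/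
open Filter

/-- The logistic function `logit(z) = e^z/(1+e^z)`. -/
noncomputable def logit (z : ℝ) : ℝ := Real.exp z / (1 + Real.exp z)

/-!
Since `0 ≤ logit ≤ 1` and `|yᵢ| = 1`, the likelihood part of `G` contributes at most
`M‖θ‖` to `⟪θ, G θ⟫`, with `M = ∑ᵢ ‖xᵢ‖`, while the prior part contributes at most `-λ_min‖θ‖²`.
The linear term is absorbed by Young's inequality `M t ≤ (3λ/4) t² + M²/(3λ)`, which leaves
`-(λ/4)(1 + t²) + β` with `β = λ/4 + M²/(3λ)`.
-/

lemma abs_logit_le_one (z : ℝ) : |logit z| ≤ 1 := by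
  have hden : 0 < 1 + Real.exp z := by positivity
  rw [logit, abs_div, abs_of_pos (Real.exp_pos z), abs_of_pos hden, div_le_one hden]
  linarith

section InnerProductSpace

variable {E ι : Type*} [NormedAddCommGroup E] [InnerProductSpace ℝ E]

lemma inner_sum_smul_le_of_abs_le_one (s : Finset ι) (θ : E) (a : ι → ℝ) (v : ι → E)
    (ha : ∀ i ∈ s, |a i| ≤ 1) :
    inner ℝ θ (∑ i ∈ s, a i • v i) ≤ (∑ i ∈ s, ‖v i‖) * ‖θ‖ := by
  rw [inner_sum, Finset.sum_mul]
  refine Finset.sum_le_sum fun i hi => ?_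
  calc inner ℝ θ (a i • v i) = a i * inner ℝ θ (v i) := real_inner_smul_right _ _ _
    _ ≤ |a i| * |inner ℝ θ (v i)| := by rw [← abs_mul]; exact le_abs_self _
    _ ≤ 1 * (‖θ‖ * ‖v i‖) := by
        gcongr
        · exact ha i hi
        · exact abs_real_inner_le_norm θ (v i)
    _ = ‖v i‖ * ‖θ‖ := by ring

lemma inner_neg_add_sum_smul_le (s : Finset ι) (A : E →ₗ[ℝ] E) (lam : ℝ)
    (hA : ∀ u, lam * ‖u‖ ^ 2 ≤ inner ℝ (A u) u) (θ : E) (a : ι → ℝ) (v : ι → E)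
    (ha : ∀ i ∈ s, |a i| ≤ 1) :
    inner ℝ θ (-A θ + ∑ i ∈ s, a i • v i) ≤ -lam * ‖θ‖ ^ 2 + (∑ i ∈ s, ‖v i‖) * ‖θ‖ := by
  have hprior := hA θ
  have hdata := inner_sum_smul_le_of_abs_le_one s θ a v ha
  rw [inner_add_right, inner_neg_right, real_inner_comm]
  linarith

end InnerProductSpace

lemma neg_mul_sq_add_mul_le {lam : ℝ} (hlam : 0 < lam) (M t : ℝ) :
    -lam * t ^ 2 + M * t ≤ -(lam / 4) * (1 + t ^ 2) + (lam / 4 + M ^ 2 / (3 * lam)) := by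
  have hyoung : M * t ≤ 3 * lam / 4 * t ^ 2 + M ^ 2 / (3 * lam) := by
    have hsq : 0 ≤ (3 * lam * t - 2 * M) ^ 2 / (12 * lam) := by positivity
    have hexpand : (3 * lam * t - 2 * M) ^ 2 / (12 * lam)
        = 3 * lam / 4 * t ^ 2 + M ^ 2 / (3 * lam) - M * t := by
      field_simp
      ring
    linarith
  linarith

theorem logistic_regression_drift_condition_general {d N : ℕ}
    (x : Fin N → EuclideanSpace ℝ (Fin d)) (y : Fin N → ℝ)
    (hy : ∀ i, y i = 1 ∨ y i = -1)
    (A : EuclideanSpace ℝ (Fin d) →ₗ[ℝ] EuclideanSpace ℝ (Fin d))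
    (lammin : ℝ) (hlam_pos : 0 < lammin)
    (hlam_lower : ∀ u, lammin * ‖u‖ ^ 2 ≤ (inner ℝ (A u) u : ℝ))
    (G : EuclideanSpace ℝ (Fin d) → EuclideanSpace ℝ (Fin d))
    (hG : ∀ θ, G θ = -A θ + ∑ i : Fin N,
      logit (-(y i) * (inner ℝ θ (x i) : ℝ)) • ((y i) • x i)) :
    ∃ β : ℝ, 0 < β ∧ ∀ θ : EuclideanSpace ℝ (Fin d),
      (inner ℝ ((2 : ℝ) • θ) ((1 / 2 : ℝ) • G θ) : ℝ)
        ≤ -(lammin / 4) * (1 + ‖θ‖ ^ 2) + β := by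
  set M := ∑ i : Fin N, ‖x i‖
  refine ⟨lammin / 4 + M ^ 2 / (3 * lammin), by positivity, fun θ => ?_⟩
  have hcoeff : ∀ i ∈ Finset.univ,
      |logit (-(y i) * inner ℝ θ (x i)) * y i| ≤ 1 := fun i _ => by
    rcases hy i with h | h <;> simpa [h, abs_mul] using abs_logit_le_one _
  calc inner ℝ ((2 : ℝ) • θ) ((1 / 2 : ℝ) • G θ) = inner ℝ θ (G θ) := by
        rw [real_inner_smul_left, real_inner_smul_right]; ring
    _ ≤ -lammin * ‖θ‖ ^ 2 + M * ‖θ‖ := by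
        simp only [hG, smul_smul]
        exact inner_neg_add_sum_smul_le _ A lammin hlam_lower θ _ x hcoeff
    _ ≤ _ := neg_mul_sq_add_mul_le hlam_pos M ‖θ‖

/-- **Drift condition for Bayesian logistic regression.** With `A = C⁻¹` symmetric positive
definite with smallest eigenvalue `λ_min > 0`,
`G(θ) = −Aθ + ∑_i logit(−y_i⟨θ,x_i⟩) y_i x_i` the gradient of the log-posterior, and
`V(θ) = 1 + ‖θ‖²`, there exists `β ∈ (0,∞)` such that
`⟨∇V(θ), ½G(θ)⟩ ≤ −(λ_min/4) V(θ) + β` for all `θ` (here `∇V(θ) = 2θ`). -/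
theorem logistic_regression_drift_condition {d N : ℕ} (hd : 1 ≤ d) (hN : 1 ≤ N)
    (x : Fin N → EuclideanSpace ℝ (Fin d)) (y : Fin N → ℝ)
    (hy : ∀ i, y i = 1 ∨ y i = -1)
    (A : EuclideanSpace ℝ (Fin d) →ₗ[ℝ] EuclideanSpace ℝ (Fin d))
    (hA_symm : ∀ u v, (inner ℝ (A u) v : ℝ) = (inner ℝ u (A v) : ℝ))
    (lammin : ℝ) (hlam_pos : 0 < lammin)
    (hlam_lower : ∀ u, lammin * ‖u‖ ^ 2 ≤ (inner ℝ (A u) u : ℝ))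
    (hlam_eig : ∃ u : EuclideanSpace ℝ (Fin d), u ≠ 0 ∧ A u = lammin • u)
    (G : EuclideanSpace ℝ (Fin d) → EuclideanSpace ℝ (Fin d))
    (hG : ∀ θ, G θ = -A θ + ∑ i : Fin N,
      logit (-(y i) * (inner ℝ θ (x i) : ℝ)) • ((y i) • x i)) :
    ∃ β : ℝ, 0 < β ∧ ∀ θ : EuclideanSpace ℝ (Fin d),
      (inner ℝ ((2 : ℝ) • θ) ((1 / 2 : ℝ) • G θ) : ℝ)
        ≤ -(lammin / 4) * (1 + ‖θ‖ ^ 2) + β :=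
  logistic_regression_drift_condition_general x y hy A lammin hlam_pos hlam_lower G hG
end
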